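/- Let g ≥ 2 and let ℓ, m be positive reals such that ℓ/m is not a ratio of two positive integers with sum at most 2g−2, and also such that ℓ/m ∉ ℚ would suffice. Let p, n, x, o be integers with n ≥ 0, 1 ≤ p + 1 ≤ g−1, 2(1−g) ≤ o ≤ −1, and suppose (ℓ/m)·(x − 2 + 2n) + 2p + 2n + o + x = 0. Then x = 2 − 2n and 2(p+1) + o = 0. -/

import Mathlib

/-- Proposition 5 computation: genericity of ℓ/m forces x = 2 − 2n and
2(p+1) + o = 0. -/
theorem stmt_2 (g : ℕ) (hg : 2 ≤ g) (ℓ m : ℝ) (hℓ : 0 < ℓ) (hm : 0 < m)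
    (hgen : ∀ p q : ℕ, 0 < p → 0 < q → p + q ≤ 2 * g - 2 → ℓ / m ≠ (p : ℝ) / q)
    (p n x o : ℤ) (hn : 0 ≤ n)
    (hp1 : 1 ≤ p + 1) (hp2 : p + 1 ≤ (g : ℤ) - 1)
    (ho1 : 2 * (1 - (g : ℤ)) ≤ o) (ho2 : o ≤ -1)
    (heq : (ℓ / m) * ((x : ℝ) - 2 + 2 * n) + 2 * p + 2 * n + o + x = 0) :
    x = 2 - 2 * n ∧ 2 * (p + 1) + o = 0 := by
  set r := ℓ / m with hrdef
  have hr : 0 < r := div_pos hℓ hm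
  have hgen' : ∀ P Q : ℤ, 0 < P → 0 < Q → P + Q ≤ 2 * (g : ℤ) - 2 →
      r ≠ (P : ℝ) / Q := by
    intro P Q hP hQ hle h
    have h1 := hgen P.toNat Q.toNat (by omega) (by omega) (by omega)
    apply h1
    rw [h]
    have e1 : ((P.toNat : ℕ) : ℝ) = (P : ℝ) := by
      exact_mod_cast congrArg (fun z : ℤ => (z : ℝ)) (Int.toNat_of_nonneg hP.le)
    have e2 : ((Q.toNat : ℕ) : ℝ) = (Q : ℝ) := by
      exact_mod_cast congrArg (fun z : ℤ => (z : ℝ)) (Int.toNat_of_nonneg hQ.le)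
    rw [e1, e2]
  have key : r * ((x - 2 + 2 * n : ℤ) : ℝ) + ((2 * p + 2 * n + o + x : ℤ) : ℝ) = 0 := by
    push_cast
    linarith [heq]
  by_cases ha : x - 2 + 2 * n = 0
  · refine ⟨by omega, ?_⟩
    rw [ha] at key
    simp at key
    have hb0 : 2 * p + 2 * n + o + x = 0 := by exact (Int.cast_eq_zero (α := ℝ)).mp (by push_cast; linarith)
    omega
  · exfalso
    set a : ℤ := x - 2 + 2 * n with hadef
    set b : ℤ := 2 * p + 2 * n + o + x with hbdef
    rcases lt_or_gt_of_ne ha with hlt | hgt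
    · -- a < 0, so b > 0, r = b / (-a)
      have hb : 0 < b := by
        by_contra hb
        push_neg at hb
        have : ((b : ℝ)) ≤ 0 := by exact_mod_cast hb
        have haR : ((a : ℝ)) < 0 := by exact_mod_cast hlt
        nlinarith
      have hsum : b + (-a) ≤ 2 * (g : ℤ) - 2 := by omega
      apply hgen' b (-a) hb (by omega) hsum
      have hnaR : ((-a : ℤ) : ℝ) ≠ 0 := by exact_mod_cast (by omega : (-a : ℤ) ≠ 0)
      rw [eq_div_iff hnaR]
      push_cast
      push_cast at key
      linarith
    · -- a > 0, so b < 0, r = (-b) / a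
      have hb : b < 0 := by
        by_contra hb
        push_neg at hb
        have : (0:ℝ) ≤ ((b : ℝ)) := by exact_mod_cast hb
        have haR : (0:ℝ) < ((a : ℝ)) := by exact_mod_cast hgt
        nlinarith
      have hsum : (-b) + a ≤ 2 * (g : ℤ) - 2 := by omega
      apply hgen' (-b) a (by omega) hgt hsum
      have haR : ((a : ℤ) : ℝ) ≠ 0 := by exact_mod_cast hgt.ne'
      rw [eq_div_iff haR]
      push_cast
      push_cast at key
      linarith
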